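/- (Proposition 3, upper bound for pseudo martingales.) Let S be a martingale (with respect to (F_j)) with S_0 = 0, let M := M* − S, and let η_0,…,η_J be randomizers. Then the randomized (pseudo martingale) dual estimator satisfies the upper-bound property E[ max_{0 ≤ j ≤ J} ( Z_j − M_j + η_j ) ] ≥ Y*_0. -/

import Mathlib

open MeasureTheory Finset

/-!
For any process `N` that is a martingale up to time `J` with `N 0 = 0`, backward induction along
the Snell recursion gives `Y j - N j ≤ E[max_{j ≤ k ≤ J} (Z k - N k) | ℱ j]`; at `j = 0`, after
taking expectations, this is the dual upper bound. `M = M⋆ - S` is such a process, `M⋆` being the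
Doob martingale of `Y`. Randomizers only increase the bound: each `Z k - M k` is
`ℱ J`-measurable and `E[η k | ℱ J] = 0`, so
`Z k - M k = E[Z k - M k + η k | ℱ J] ≤ E[max_l (Z l - M l + η l) | ℱ J]`.
-/

namespace MeasureTheory

variable {Ω : Type*} {mΩ : MeasurableSpace Ω} {μ : Measure Ω}

lemma integrable_finset_sup' {ι : Type*} {s : Finset ι} (hs : s.Nonempty) {X : ι → Ω → ℝ}
    (hX : ∀ i ∈ s, Integrable (X i) μ) : Integrable (fun ω => s.sup' hs (X · ω)) μ :=
  (sup'_induction hs X (p := (Integrable · μ)) (fun _ h₁ _ h₂ => h₁.sup h₂) hX).congr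
    (ae_of_all _ (Finset.sup'_apply hs X))

theorem integral_sup'_le_integral_sup'_add [IsFiniteMeasure μ] {m : MeasurableSpace Ω}
    (hm : m ≤ mΩ) {ι : Type*} {s : Finset ι} (hs : s.Nonempty) {X η : ι → Ω → ℝ}
    (hX_meas : ∀ i ∈ s, StronglyMeasurable[m] (X i)) (hX_int : ∀ i ∈ s, Integrable (X i) μ)
    (hη_int : ∀ i ∈ s, Integrable (η i) μ) (hη : ∀ i ∈ s, μ[η i | m] =ᵐ[μ] 0) :
    ∫ ω, s.sup' hs (X · ω) ∂μ ≤ ∫ ω, s.sup' hs (fun i => X i ω + η i ω) ∂μ := by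
  set G := fun ω => s.sup' hs (fun i => X i ω + η i ω)
  have hG_int : Integrable G μ :=
    integrable_finset_sup' hs (X := fun i ω => X i ω + η i ω) fun i hi =>
      (hX_int i hi).add (hη_int i hi)
  have hX_le : ∀ i ∈ s, X i ≤ᵐ[μ] μ[G | m] := by
    intro i hi
    filter_upwards [condExp_add (hX_int i hi) (hη_int i hi) m, hη i hi,
      condExp_mono (m := m) ((hX_int i hi).add (hη_int i hi)) hG_int
        (ae_of_all _ fun ω => le_sup' (fun i => X i ω + η i ω) hi)] with ω h_add h_zero h_mono
    rw [condExp_of_stronglyMeasurable hm (hX_meas i hi) (hX_int i hi)] at h_add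
    simp only [Pi.add_apply, h_zero, Pi.zero_apply, add_zero] at h_add
    rwa [← h_add]
  have hsup_le : (fun ω => s.sup' hs (X · ω)) ≤ᵐ[μ] μ[G | m] := by
    filter_upwards [(Filter.eventually_all_finset s).mpr hX_le] with ω hω
    exact sup'_le hs _ hω
  calc ∫ ω, s.sup' hs (X · ω) ∂μ ≤ ∫ ω, μ[G | m] ω ∂μ :=
        integral_mono_ae (integrable_finset_sup' hs hX_int) integrable_condExp hsup_le
    _ = ∫ ω, G ω ∂μ := integral_condExp hm

/-- A martingale on the finite horizon `{0, …, J}`: the Snell envelope, hence `M⋆`, is only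
specified up to time `J`. -/
structure MartingaleUpTo (μ : Measure Ω) (ℱ : Filtration ℕ mΩ) (J : ℕ) (N : ℕ → Ω → ℝ) :
    Prop where
  stronglyMeasurable : ∀ j ≤ J, StronglyMeasurable[ℱ j] (N j)
  integrable : ∀ j ≤ J, Integrable (N j) μ
  condExp_succ : ∀ j < J, μ[N (j + 1) | ℱ j] =ᵐ[μ] N j

variable {ℱ : Filtration ℕ mΩ} {J : ℕ}

lemma Martingale.martingaleUpTo {N : ℕ → Ω → ℝ} (hN : Martingale N ℱ μ) (J : ℕ) :
    MartingaleUpTo μ ℱ J N :=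
  ⟨fun j _ => hN.stronglyAdapted j, fun j _ => hN.integrable j,
    fun j _ => hN.condExp_ae_eq j.le_succ⟩

lemma MartingaleUpTo.sub {N₁ N₂ : ℕ → Ω → ℝ} (h₁ : MartingaleUpTo μ ℱ J N₁)
    (h₂ : MartingaleUpTo μ ℱ J N₂) : MartingaleUpTo μ ℱ J (N₁ - N₂) where
  stronglyMeasurable j hj := (h₁.stronglyMeasurable j hj).sub (h₂.stronglyMeasurable j hj)
  integrable j hj := (h₁.integrable j hj).sub (h₂.integrable j hj)
  condExp_succ j hj :=
    (condExp_sub (h₁.integrable _ hj) (h₂.integrable _ hj) _).trans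
      ((h₁.condExp_succ j hj).sub (h₂.condExp_succ j hj))

/-- The paper's `M⋆`; for adapted integrable `Y` it is `martingalePart Y ℱ μ - Y 0` a.e. -/
noncomputable def doobMartingale (μ : Measure Ω) (ℱ : Filtration ℕ mΩ) (Y : ℕ → Ω → ℝ) :
    ℕ → Ω → ℝ :=
  fun j => ∑ l ∈ range j, (Y (l + 1) - μ[Y (l + 1) | ℱ l])

@[simp]
lemma doobMartingale_zero (Y : ℕ → Ω → ℝ) : doobMartingale μ ℱ Y 0 = 0 := by
  simp [doobMartingale]

lemma doobMartingale_apply (Y : ℕ → Ω → ℝ) (j : ℕ) (ω : Ω) :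
    doobMartingale μ ℱ Y j ω = ∑ l ∈ range j, (Y (l + 1) ω - μ[Y (l + 1) | ℱ l] ω) := by
  simp [doobMartingale, Finset.sum_apply]

lemma martingaleUpTo_doobMartingale [IsFiniteMeasure μ] {Y : ℕ → Ω → ℝ}
    (hY_meas : ∀ j ≤ J, StronglyMeasurable[ℱ j] (Y j)) (hY_int : ∀ j ≤ J, Integrable (Y j) μ) :
    MartingaleUpTo μ ℱ J (doobMartingale μ ℱ Y) := by
  have h_meas : ∀ j ≤ J, StronglyMeasurable[ℱ j] (doobMartingale μ ℱ Y j) :=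
    fun j hj => stronglyMeasurable_sum _ fun l hl =>
      ((hY_meas (l + 1) (by grind)).mono (ℱ.mono (by grind))).sub
        (stronglyMeasurable_condExp.mono (ℱ.mono (by grind)))
  have h_int : ∀ j ≤ J, Integrable (doobMartingale μ ℱ Y j) μ :=
    fun j hj => integrable_finsetSum' _ fun l hl =>
      (hY_int (l + 1) (by grind)).sub integrable_condExp
  refine ⟨h_meas, h_int, fun j hj => ?_⟩
  have hY_succ_int := hY_int (j + 1) hj
  have h_succ : doobMartingale μ ℱ Y (j + 1) =
      doobMartingale μ ℱ Y j + (Y (j + 1) - μ[Y (j + 1) | ℱ j]) := sum_range_succ _ _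
  rw [h_succ]
  filter_upwards [condExp_add (h_int j hj.le) (hY_succ_int.sub integrable_condExp) (ℱ j),
    condExp_sub hY_succ_int integrable_condExp (ℱ j)] with ω h_add h_sub
  rw [h_add, Pi.add_apply, h_sub, Pi.sub_apply,
    condExp_of_stronglyMeasurable (ℱ.le j) stronglyMeasurable_condExp integrable_condExp,
    condExp_of_stronglyMeasurable (ℱ.le j) (h_meas j hj.le) (h_int j hj.le), sub_self, add_zero]

structure IsSnellEnvelope (μ : Measure Ω) (ℱ : Filtration ℕ mΩ) (J : ℕ) (Z Y : ℕ → Ω → ℝ) :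
    Prop where
  terminal : Y J = Z J
  backward : ∀ j < J, Y j = Z j ⊔ μ[Y (j + 1) | ℱ j]

namespace IsSnellEnvelope

variable {Z Y N : ℕ → Ω → ℝ}

lemma stronglyMeasurable (hY : IsSnellEnvelope μ ℱ J Z Y) (hZ : Adapted ℱ Z) {j : ℕ}
    (hj : j ≤ J) : StronglyMeasurable[ℱ j] (Y j) := by
  rcases hj.eq_or_lt with rfl | hj
  · rw [hY.terminal]
    exact (hZ j).stronglyMeasurable
  · rw [hY.backward j hj]
    exact @StronglyMeasurable.sup Ω ℝ _ _ (ℱ j) _ _ _ (hZ j).stronglyMeasurable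
      stronglyMeasurable_condExp

lemma integrable (hY : IsSnellEnvelope μ ℱ J Z Y) (hZ : ∀ j, Integrable (Z j) μ) {j : ℕ}
    (hj : j ≤ J) : Integrable (Y j) μ := by
  rcases hj.eq_or_lt with rfl | hj
  · rw [hY.terminal]
    exact hZ j
  · rw [hY.backward j hj]
    exact (hZ j).sup integrable_condExp

theorem sub_ae_le_condExp_sup' [IsFiniteMeasure μ] (hY : IsSnellEnvelope μ ℱ J Z Y)
    (hZ_adapted : Adapted ℱ Z) (hZ_int : ∀ j, Integrable (Z j) μ) (hN : MartingaleUpTo μ ℱ J N)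
    {j : ℕ} (hj : j ≤ J) :
    Y j - N j ≤ᵐ[μ]
      μ[fun ω => (Icc j J).sup' (nonempty_Icc.mpr hj) (fun k => Z k ω - N k ω) | ℱ j] := by
  have hZN_meas : ∀ k ≤ J, StronglyMeasurable[ℱ k] (Z k - N k) :=
    fun k hk => (hZ_adapted k).stronglyMeasurable.sub (hN.stronglyMeasurable k hk)
  have hZN_int : ∀ k ≤ J, Integrable (Z k - N k) μ :=
    fun k hk => (hZ_int k).sub (hN.integrable k hk)
  have hsup_int : ∀ k (hk : k ≤ J), Integrable
      (fun ω => (Icc k J).sup' (nonempty_Icc.mpr hk) (fun i => Z i ω - N i ω)) μ :=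
    fun k hk => integrable_finset_sup' _ fun i hi => hZN_int i (mem_Icc.mp hi).2
  induction hj using Nat.decreasingInduction with
  | self =>
    have h_single : (fun ω => (Icc J J).sup' (nonempty_Icc.mpr le_rfl)
        (fun k => Z k ω - N k ω)) = Z J - N J := by
      funext ω
      simp
    rw [h_single, condExp_of_stronglyMeasurable (ℱ.le J) (hZN_meas J le_rfl)
      (hZN_int J le_rfl), hY.terminal]
  | of_succ j hj ih =>
    have hG_mono : (fun ω => (Icc (j + 1) J).sup' (nonempty_Icc.mpr hj)
        (fun k => Z k ω - N k ω)) ≤ fun ω => (Icc j J).sup' (nonempty_Icc.mpr hj.le)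
          (fun k => Z k ω - N k ω) :=
      fun ω => sup'_mono _ (Icc_subset_Icc_left j.le_succ) _
    have h_stop : Z j - N j ≤ᵐ[μ] μ[fun ω => (Icc j J).sup' (nonempty_Icc.mpr hj.le)
        (fun k => Z k ω - N k ω) | ℱ j] := by
      rw [← condExp_of_stronglyMeasurable (ℱ.le j) (hZN_meas j hj.le) (hZN_int j hj.le)]
      exact condExp_mono (hZN_int j hj.le) (hsup_int j hj.le) (ae_of_all _ fun ω =>
        le_sup' (fun k => Z k ω - N k ω) (left_mem_Icc.mpr hj.le))
    have h_continue : μ[Y (j + 1) | ℱ j] - N j ≤ᵐ[μ] μ[fun ω => (Icc j J).sup'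
        (nonempty_Icc.mpr hj.le) (fun k => Z k ω - N k ω) | ℱ j] :=
      calc μ[Y (j + 1) | ℱ j] - N j
          =ᵐ[μ] μ[Y (j + 1) - N (j + 1) | ℱ j] :=
            (Filter.EventuallyEq.rfl.sub (hN.condExp_succ j hj).symm).trans
              (condExp_sub (hY.integrable hZ_int hj) (hN.integrable _ hj) _).symm
        _ ≤ᵐ[μ] μ[μ[fun ω => (Icc (j + 1) J).sup' (nonempty_Icc.mpr hj)
            (fun k => Z k ω - N k ω) | ℱ (j + 1)] | ℱ j] :=
            condExp_mono ((hY.integrable hZ_int hj).sub (hN.integrable _ hj)) integrable_condExp ih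
        _ =ᵐ[μ] μ[fun ω => (Icc (j + 1) J).sup' (nonempty_Icc.mpr hj)
            (fun k => Z k ω - N k ω) | ℱ j] := condExp_condExp_of_le (ℱ.mono j.le_succ) (ℱ.le _)
        _ ≤ᵐ[μ] _ := condExp_mono (hsup_int _ hj) (hsup_int _ hj.le) (ae_of_all _ hG_mono)
    filter_upwards [h_stop, h_continue] with ω h_stop h_continue
    rw [Pi.sub_apply, hY.backward j hj, Pi.sup_apply, sub_le_iff_le_add]
    simp only [Pi.sub_apply] at h_stop h_continue
    exact max_le (by linarith) (by linarith)

theorem integral_le_integral_sup' [IsFiniteMeasure μ] (hY : IsSnellEnvelope μ ℱ J Z Y)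
    (hZ_adapted : Adapted ℱ Z) (hZ_int : ∀ j, Integrable (Z j) μ) (hN : MartingaleUpTo μ ℱ J N)
    (hN_zero : N 0 = 0) :
    ∫ ω, Y 0 ω ∂μ ≤
      ∫ ω, (Icc 0 J).sup' (nonempty_Icc.mpr J.zero_le) (fun k => Z k ω - N k ω) ∂μ := by
  have h := hY.sub_ae_le_condExp_sup' hZ_adapted hZ_int hN J.zero_le
  rw [hN_zero, sub_zero] at h
  exact (integral_mono_ae (hY.integrable hZ_int J.zero_le) integrable_condExp h).trans_eq
    (integral_condExp (ℱ.le 0))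

end IsSnellEnvelope

end MeasureTheory

theorem randomized_dual_upper_bound_general
    {Ω : Type*} {mΩ : MeasurableSpace Ω} {μ : Measure Ω} [IsProbabilityMeasure μ]
    (J : ℕ) (ℱ : Filtration ℕ mΩ)
    (Z Y Mstar : ℕ → Ω → ℝ)
    (hZ_adapted : Adapted ℱ Z)
    (hZ_int : ∀ j, Integrable (Z j) μ)
    (hYJ : ∀ ω, Y J ω = Z J ω)
    (hY : ∀ j, j < J → ∀ ω, Y j ω = max (Z j ω) ((μ[Y (j + 1) | ℱ j]) ω))
    (hMstar : ∀ j ω, Mstar j ω =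
      ∑ l ∈ Finset.range j, (Y (l + 1) ω - (μ[Y (l + 1) | ℱ l]) ω))
    -- the martingale shift `S` and the pseudo martingale ingredient `M = M⋆ − S`
    (S M : ℕ → Ω → ℝ)
    (hS : Martingale S ℱ μ)
    (hS0 : ∀ ω, S 0 ω = 0)
    (hMdef : ∀ j ω, M j ω = Mstar j ω - S j ω)
    -- the randomizers
    (η : ℕ → Ω → ℝ)
    (hη_int : ∀ j, Integrable (η j) μ)
    (hη_mean : ∀ j, μ[η j | ℱ J] =ᵐ[μ] 0) :
    ∫ ω, Y 0 ω ∂μ ≤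
      ∫ ω, (Finset.Icc 0 J).sup' (Finset.nonempty_Icc.mpr (Nat.zero_le J))
        (fun j => Z j ω - M j ω + η j ω) ∂μ := by
  have hsnell : IsSnellEnvelope μ ℱ J Z Y := ⟨funext hYJ, fun j hj => funext (hY j hj)⟩
  have hM_eq : M = doobMartingale μ ℱ Y - S := by
    funext j ω
    rw [hMdef, hMstar, Pi.sub_apply, Pi.sub_apply, doobMartingale_apply]
  have hM : MartingaleUpTo μ ℱ J M := hM_eq ▸
    (martingaleUpTo_doobMartingale (fun _ => hsnell.stronglyMeasurable hZ_adapted)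
      (fun _ => hsnell.integrable hZ_int)).sub (hS.martingaleUpTo J)
  have hM_zero : M 0 = 0 := by
    funext ω
    simp [hM_eq, hS0]
  calc ∫ ω, Y 0 ω ∂μ
      ≤ ∫ ω, (Icc 0 J).sup' _ (fun k => Z k ω - M k ω) ∂μ :=
        hsnell.integral_le_integral_sup' hZ_adapted hZ_int hM hM_zero
    _ ≤ _ := integral_sup'_le_integral_sup'_add (ℱ.le J) _ (X := fun k ω => Z k ω - M k ω)
        (fun k hk => ((hZ_adapted k).stronglyMeasurable.sub
          (hM.stronglyMeasurable k (mem_Icc.mp hk).2)).mono (ℱ.mono (mem_Icc.mp hk).2))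
        (fun k hk => (hZ_int k).sub (hM.integrable k (mem_Icc.mp hk).2))
        (fun k _ => hη_int k) (fun k _ => hη_mean k)

/-- **Proposition 3, upper bound for pseudo martingales.** Let `S` be a martingale with
`S 0 = 0`, let `M := M⋆ − S`, and let `η 0,…,η J` be randomizers (integrable random variables
with `E[η j | ℱ J] = 0`). Then the randomized dual estimator satisfies the upper-bound
property `E[ max_{0 ≤ j ≤ J} (Z j − M j + η j) ] ≥ Y⋆ 0` (where `ℱ 0` is ℙ-trivial, so that
`Y⋆ 0` is a.s. constant and equal to its expectation). -/
theorem randomized_dual_upper_bound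
    {Ω : Type*} {mΩ : MeasurableSpace Ω} {μ : Measure Ω} [IsProbabilityMeasure μ]
    (J : ℕ) (ℱ : Filtration ℕ mΩ)
    (hF0 : ∀ s : Set Ω, MeasurableSet[ℱ 0] s → μ s = 0 ∨ μ s = 1)
    (Z Y Mstar : ℕ → Ω → ℝ)
    (hZ_adapted : Adapted ℱ Z)
    (hZ_int : ∀ j, Integrable (Z j) μ)
    (hYJ : ∀ ω, Y J ω = Z J ω)
    (hY : ∀ j, j < J → ∀ ω, Y j ω = max (Z j ω) ((μ[Y (j + 1) | ℱ j]) ω))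
    (hMstar : ∀ j ω, Mstar j ω =
      ∑ l ∈ Finset.range j, (Y (l + 1) ω - (μ[Y (l + 1) | ℱ l]) ω))
    -- the martingale shift `S` and the pseudo martingale ingredient `M = M⋆ − S`
    (S M : ℕ → Ω → ℝ)
    (hS : Martingale S ℱ μ)
    (hS0 : ∀ ω, S 0 ω = 0)
    (hMdef : ∀ j ω, M j ω = Mstar j ω - S j ω)
    -- the randomizers
    (η : ℕ → Ω → ℝ)
    (hη_int : ∀ j, Integrable (η j) μ)
    (hη_mean : ∀ j, μ[η j | ℱ J] =ᵐ[μ] 0) :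
    ∫ ω, Y 0 ω ∂μ ≤
      ∫ ω, (Finset.Icc 0 J).sup' (Finset.nonempty_Icc.mpr (Nat.zero_le J))
        (fun j => Z j ω - M j ω + η j ω) ∂μ :=
  randomized_dual_upper_bound_general J ℱ Z Y Mstar hZ_adapted hZ_int hYJ hY hMstar S M hS hS0 hMdef
    η hη_int hη_mean
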